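/- For no formula A is the formula A ∧ ¬A provable in the system C from no undischarged assumptions. -/
import Mathlib

/- Milne's system **C** of classical propositional logic with general
introduction and general elimination rules (Kürbis, "Normalisation and
Subformula Property for a System of Classical Logic with Tarski's Rule").

Formulas are built from atoms by ¬, ∧, ∨, ⊃. -/
inductive Formula : Type
  | atom : ℕ → Formula
  | neg  : Formula → Formula
  | conj : Formula → Formula → Formula
  | disj : Formula → Formula → Formula
  | imp  : Formula → Formula → Formula
  deriving DecidableEq

/-- Raw deduction trees of the system **C**.  Assumption occurrences carry a
label (natural number) marking their assumption class; each rule that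
discharges assumptions records the label(s) of the class(es) it discharges.
Constructor arguments list first the labels, then the formulas figuring in the
rule, then the immediate subdeductions (major premise first for eliminations;
for introductions: the specific premise(s), then the deduction of the
arbitrary premise from the discharged major assumption).

* `ass ℓ A`           : the assumption `A`, in assumption class `ℓ`.
* `andI ℓ A B ΣA ΣB Π` : from `A`, `B` and `C`-from-`[A∧B]^ℓ` infer `C`.
* `andE ℓA ℓB A B M Π` : from `A∧B` and `C`-from-`[A]^ℓA,[B]^ℓB` infer `C`.
* `orI₁ ℓ A B ΣA Π`    : from `A` and `C`-from-`[A∨B]^ℓ` infer `C`.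
* `orI₂ ℓ A B ΣB Π`    : from `B` and `C`-from-`[A∨B]^ℓ` infer `C`.
* `orE ℓA ℓB A B M Π Ξ`: from `A∨B`, `C`-from-`[A]^ℓA`, `C`-from-`[B]^ℓB` infer `C`.
* `impI ℓ A B ΣB Π`    : from `B` and `C`-from-`[A⊃B]^ℓ` infer `C`.
* `tr ℓA ℓAB A B Π Ξ`  : Tarski's Rule: from `C`-from-`[A]^ℓA` and
                         `C`-from-`[A⊃B]^ℓAB` infer `C`.
* `impE ℓ A B M ΣA Π`  : from `A⊃B`, `A` and `C`-from-`[B]^ℓ` infer `C`.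
* `negI ℓA ℓnA A Π Ξ`  : from `C`-from-`[A]^ℓA` and `C`-from-`[¬A]^ℓnA` infer `C`.
* `negE A C M ΣA`      : from `¬A` and `A` infer any `C`. -/
inductive PT : Type
  | ass  : ℕ → Formula → PT
  | andI : ℕ → Formula → Formula → PT → PT → PT → PT
  | andE : ℕ → ℕ → Formula → Formula → PT → PT → PT
  | orI₁ : ℕ → Formula → Formula → PT → PT → PT
  | orI₂ : ℕ → Formula → Formula → PT → PT → PT
  | orE  : ℕ → ℕ → Formula → Formula → PT → PT → PT → PT
  | impI : ℕ → Formula → Formula → PT → PT → PT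
  | tr   : ℕ → ℕ → Formula → Formula → PT → PT → PT
  | impE : ℕ → Formula → Formula → PT → PT → PT → PT
  | negI : ℕ → ℕ → Formula → PT → PT → PT
  | negE : Formula → Formula → PT → PT → PT
  deriving DecidableEq

namespace PT

/-- The conclusion (root formula) of a deduction tree. -/
def concl : PT → Formula
  | .ass _ A => A
  | .andI _ _ _ _ _ r => r.concl
  | .andE _ _ _ _ _ q => q.concl
  | .orI₁ _ _ _ _ q => q.concl
  | .orI₂ _ _ _ _ q => q.concl
  | .orE _ _ _ _ _ q _ => q.concl
  | .impI _ _ _ _ q => q.concl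
  | .tr _ _ _ _ p _ => p.concl
  | .impE _ _ _ _ _ r => r.concl
  | .negI _ _ _ p _ => p.concl
  | .negE _ C _ _ => C

/-- The multiset of open (undischarged) labelled assumptions of a deduction. -/
def openAss : PT → Multiset (ℕ × Formula)
  | .ass ℓ A => {(ℓ, A)}
  | .andI ℓ _ _ p q r =>
      p.openAss + q.openAss + (r.openAss.filter fun z => z.1 ≠ ℓ)
  | .andE ℓA ℓB _ _ p q =>
      p.openAss + (q.openAss.filter fun z => z.1 ≠ ℓA ∧ z.1 ≠ ℓB)
  | .orI₁ ℓ _ _ p q => p.openAss + (q.openAss.filter fun z => z.1 ≠ ℓ)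
  | .orI₂ ℓ _ _ p q => p.openAss + (q.openAss.filter fun z => z.1 ≠ ℓ)
  | .orE ℓA ℓB _ _ p q r =>
      p.openAss + (q.openAss.filter fun z => z.1 ≠ ℓA) +
        (r.openAss.filter fun z => z.1 ≠ ℓB)
  | .impI ℓ _ _ p q => p.openAss + (q.openAss.filter fun z => z.1 ≠ ℓ)
  | .tr ℓA ℓAB _ _ p q =>
      (p.openAss.filter fun z => z.1 ≠ ℓA) + (q.openAss.filter fun z => z.1 ≠ ℓAB)
  | .impE ℓ _ _ p q r =>
      p.openAss + q.openAss + (r.openAss.filter fun z => z.1 ≠ ℓ)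
  | .negI ℓA ℓnA _ p q =>
      (p.openAss.filter fun z => z.1 ≠ ℓA) + (q.openAss.filter fun z => z.1 ≠ ℓnA)
  | .negE _ _ p q => p.openAss + q.openAss

/-- Correctness of a deduction tree: the subdeductions conclude the right
formulas, every open assumption in a discharged class has the form required
by the rule, and (ban on vacuous discharge above arbitrary premises) each
discharge actually discharges at least one assumption occurrence — in `∧E`
at least one of the two classes `[A]`, `[B]` is non-empty, which reflects the
option of discharging only one of the two assumptions. -/
def wf : PT → Prop
  | .ass _ _ => True
  | .andI ℓ A B p q r => p.wf ∧ q.wf ∧ r.wf ∧ p.concl = A ∧ q.concl = B ∧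
      (∀ F, (ℓ, F) ∈ r.openAss → F = Formula.conj A B) ∧
      (ℓ, Formula.conj A B) ∈ r.openAss
  | .andE ℓA ℓB A B p q => p.wf ∧ q.wf ∧ p.concl = Formula.conj A B ∧
      (∀ F, (ℓA, F) ∈ q.openAss → F = A) ∧ (∀ F, (ℓB, F) ∈ q.openAss → F = B) ∧
      ((ℓA, A) ∈ q.openAss ∨ (ℓB, B) ∈ q.openAss)
  | .orI₁ ℓ A B p q => p.wf ∧ q.wf ∧ p.concl = A ∧
      (∀ F, (ℓ, F) ∈ q.openAss → F = Formula.disj A B) ∧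
      (ℓ, Formula.disj A B) ∈ q.openAss
  | .orI₂ ℓ A B p q => p.wf ∧ q.wf ∧ p.concl = B ∧
      (∀ F, (ℓ, F) ∈ q.openAss → F = Formula.disj A B) ∧
      (ℓ, Formula.disj A B) ∈ q.openAss
  | .orE ℓA ℓB A B p q r => p.wf ∧ q.wf ∧ r.wf ∧
      p.concl = Formula.disj A B ∧ q.concl = r.concl ∧
      (∀ F, (ℓA, F) ∈ q.openAss → F = A) ∧ (ℓA, A) ∈ q.openAss ∧
      (∀ F, (ℓB, F) ∈ r.openAss → F = B) ∧ (ℓB, B) ∈ r.openAss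
  | .impI ℓ A B p q => p.wf ∧ q.wf ∧ p.concl = B ∧
      (∀ F, (ℓ, F) ∈ q.openAss → F = Formula.imp A B) ∧
      (ℓ, Formula.imp A B) ∈ q.openAss
  | .tr ℓA ℓAB A B p q => p.wf ∧ q.wf ∧ p.concl = q.concl ∧
      (∀ F, (ℓA, F) ∈ p.openAss → F = A) ∧ (ℓA, A) ∈ p.openAss ∧
      (∀ F, (ℓAB, F) ∈ q.openAss → F = Formula.imp A B) ∧
      (ℓAB, Formula.imp A B) ∈ q.openAss
  | .impE ℓ A B p q r => p.wf ∧ q.wf ∧ r.wf ∧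
      p.concl = Formula.imp A B ∧ q.concl = A ∧
      (∀ F, (ℓ, F) ∈ r.openAss → F = B) ∧ (ℓ, B) ∈ r.openAss
  | .negI ℓA ℓnA A p q => p.wf ∧ q.wf ∧ p.concl = q.concl ∧
      (∀ F, (ℓA, F) ∈ p.openAss → F = A) ∧ (ℓA, A) ∈ p.openAss ∧
      (∀ F, (ℓnA, F) ∈ q.openAss → F = Formula.neg A) ∧
      (ℓnA, Formula.neg A) ∈ q.openAss
  | .negE A _ p q => p.wf ∧ q.wf ∧ p.concl = Formula.neg A ∧ q.concl = A

/-- The set of formulas that occur as undischarged assumptions of a deduction. -/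
def assumptions (d : PT) : Set Formula := {A | ∃ ℓ, (ℓ, A) ∈ d.openAss}

end PT

/-- A truth valuation making all atoms true. -/
def val : Formula → Prop
  | .atom _ => True
  | .neg A => ¬ val A
  | .conj A B => val A ∧ val B
  | .disj A B => val A ∨ val B
  | .imp A B => val A → val B

set_option maxHeartbeats 2000000 in
theorem sound : ∀ d : PT, d.wf → (∀ x ∈ d.openAss, val x.2) → val d.concl := by
  intro d
  induction d with
  | ass ℓ A =>
    intro _ h
    exact h (ℓ, A) (by simp [PT.openAss])
  | andI ℓ A B p q r ihp ihq ihr =>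
    intro hw h
    obtain ⟨wp, wq, wr, cp, cq, hall, _⟩ := hw
    have hA : val A := cp ▸ ihp wp (fun x hx => h x (by simp [PT.openAss, Multiset.mem_add]; tauto))
    have hB : val B := cq ▸ ihq wq (fun x hx => h x (by simp [PT.openAss, Multiset.mem_add]; tauto))
    refine ihr wr ?_
    intro x hx
    by_cases hℓ : x.1 = ℓ
    · have := hall x.2 (by rw [← hℓ]; exact hx)
      rw [this]; exact ⟨hA, hB⟩
    · exact h x (by simp [PT.openAss, Multiset.mem_add, Multiset.mem_filter]; tauto)
  | andE ℓA ℓB A B p q ihp ihq =>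
    intro hw h
    obtain ⟨wp, wq, cp, hA, hB, _⟩ := hw
    have hAB : val (Formula.conj A B) := cp ▸ ihp wp (fun x hx => h x (by simp [PT.openAss, Multiset.mem_add]; tauto))
    simp only [val] at hAB
    refine ihq wq ?_
    intro x hx
    by_cases h1 : x.1 = ℓA
    · have := hA x.2 (by rw [← h1]; exact hx); rw [this]; exact hAB.1
    by_cases h2 : x.1 = ℓB
    · have := hB x.2 (by rw [← h2]; exact hx); rw [this]; exact hAB.2
    · exact h x (by simp [PT.openAss, Multiset.mem_add, Multiset.mem_filter]; tauto)
  | orI₁ ℓ A B p q ihp ihq =>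
    intro hw h
    obtain ⟨wp, wq, cp, hall, _⟩ := hw
    have hA : val A := cp ▸ ihp wp (fun x hx => h x (by simp [PT.openAss, Multiset.mem_add]; tauto))
    refine ihq wq ?_
    intro x hx
    by_cases hℓ : x.1 = ℓ
    · have := hall x.2 (by rw [← hℓ]; exact hx); rw [this]; exact Or.inl hA
    · exact h x (by simp [PT.openAss, Multiset.mem_add, Multiset.mem_filter]; tauto)
  | orI₂ ℓ A B p q ihp ihq =>
    intro hw h
    obtain ⟨wp, wq, cp, hall, _⟩ := hw
    have hB : val B := cp ▸ ihp wp (fun x hx => h x (by simp [PT.openAss, Multiset.mem_add]; tauto))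
    refine ihq wq ?_
    intro x hx
    by_cases hℓ : x.1 = ℓ
    · have := hall x.2 (by rw [← hℓ]; exact hx); rw [this]; exact Or.inr hB
    · exact h x (by simp [PT.openAss, Multiset.mem_add, Multiset.mem_filter]; tauto)
  | orE ℓA ℓB A B p q r ihp ihq ihr =>
    intro hw h
    obtain ⟨wp, wq, wr, cp, cqr, hA, _, hB, _⟩ := hw
    have hAB : val (Formula.disj A B) := cp ▸ ihp wp (fun x hx => h x (by simp [PT.openAss, Multiset.mem_add]; tauto))
    simp only [val] at hAB
    rcases hAB with hA' | hB'
    · refine ihq wq ?_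
      intro x hx
      by_cases hℓ : x.1 = ℓA
      · have := hA x.2 (by rw [← hℓ]; exact hx); rw [this]; exact hA'
      · exact h x (by simp [PT.openAss, Multiset.mem_add, Multiset.mem_filter]; tauto)
    · show val q.concl
      rw [cqr]
      refine ihr wr ?_
      intro x hx
      by_cases hℓ : x.1 = ℓB
      · have := hB x.2 (by rw [← hℓ]; exact hx); rw [this]; exact hB'
      · exact h x (by simp [PT.openAss, Multiset.mem_add, Multiset.mem_filter]; tauto)
  | impI ℓ A B p q ihp ihq =>
    intro hw h
    obtain ⟨wp, wq, cp, hall, _⟩ := hw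
    have hB : val B := cp ▸ ihp wp (fun x hx => h x (by simp [PT.openAss, Multiset.mem_add]; tauto))
    refine ihq wq ?_
    intro x hx
    by_cases hℓ : x.1 = ℓ
    · have := hall x.2 (by rw [← hℓ]; exact hx); rw [this]; exact fun _ => hB
    · exact h x (by simp [PT.openAss, Multiset.mem_add, Multiset.mem_filter]; tauto)
  | tr ℓA ℓAB A B p q ihp ihq =>
    intro hw h
    obtain ⟨wp, wq, cpq, hA, _, hAB, _⟩ := hw
    by_cases hvA : val A
    · refine ihp wp ?_
      intro x hx
      by_cases hℓ : x.1 = ℓA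
      · have := hA x.2 (by rw [← hℓ]; exact hx); rw [this]; exact hvA
      · exact h x (by simp [PT.openAss, Multiset.mem_add, Multiset.mem_filter]; tauto)
    · show val p.concl
      rw [cpq]
      refine ihq wq ?_
      intro x hx
      by_cases hℓ : x.1 = ℓAB
      · have := hAB x.2 (by rw [← hℓ]; exact hx); rw [this]
        exact fun hv => absurd hv hvA
      · exact h x (by simp [PT.openAss, Multiset.mem_add, Multiset.mem_filter]; tauto)
  | impE ℓ A B p q r ihp ihq ihr =>
    intro hw h
    obtain ⟨wp, wq, wr, cp, cq, hall, _⟩ := hw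
    have hAB : val (Formula.imp A B) := cp ▸ ihp wp (fun x hx => h x (by simp [PT.openAss, Multiset.mem_add]; tauto))
    simp only [val] at hAB
    have hA : val A := cq ▸ ihq wq (fun x hx => h x (by simp [PT.openAss, Multiset.mem_add]; tauto))
    refine ihr wr ?_
    intro x hx
    by_cases hℓ : x.1 = ℓ
    · have := hall x.2 (by rw [← hℓ]; exact hx); rw [this]; exact hAB hA
    · exact h x (by simp [PT.openAss, Multiset.mem_add, Multiset.mem_filter]; tauto)
  | negI ℓA ℓnA A p q ihp ihq =>
    intro hw h
    obtain ⟨wp, wq, cpq, hA, _, hnA, _⟩ := hw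
    by_cases hvA : val A
    · refine ihp wp ?_
      intro x hx
      by_cases hℓ : x.1 = ℓA
      · have := hA x.2 (by rw [← hℓ]; exact hx); rw [this]; exact hvA
      · exact h x (by simp [PT.openAss, Multiset.mem_add, Multiset.mem_filter]; tauto)
    · show val p.concl
      rw [cpq]
      refine ihq wq ?_
      intro x hx
      by_cases hℓ : x.1 = ℓnA
      · have := hnA x.2 (by rw [← hℓ]; exact hx); rw [this]; exact hvA
      · exact h x (by simp [PT.openAss, Multiset.mem_add, Multiset.mem_filter]; tauto)
  | negE A C p q ihp ihq =>
    intro hw h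
    obtain ⟨wp, wq, cp, cq⟩ := hw
    have hnA : val (Formula.neg A) := cp ▸ ihp wp (fun x hx => h x (by simp [PT.openAss, Multiset.mem_add]; tauto))
    simp only [val] at hnA
    have hA : val A := cq ▸ ihq wq (fun x hx => h x (by simp [PT.openAss, Multiset.mem_add]; tauto))
    exact absurd hA hnA

/-- For no formula `A` is `A ∧ ¬A` provable in the system C
from no undischarged assumptions. -/
theorem no_contradiction_provable (A : Formula) :
    ¬ ∃ d : PT, d.wf ∧ d.concl = Formula.conj A (Formula.neg A) ∧
      d.openAss = 0 := by
  rintro ⟨d, hw, hc, ho⟩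
  have := sound d hw (by rw [ho]; simp)
  rw [hc] at this
  exact this.2 this.1
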